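/- arXiv:2211.04936 — 5 statements merged into one kernel-verified Lean document; each statement's English description precedes it below -/
import Mathlib

section
/- Let A, B ∈ GL(d, ℝ) be expansive matrices with associated step homogeneous quasi-norms ρ_A, ρ_B. Then ρ_A and ρ_B are equivalent (i.e., there exists C ≥ 1 with (1/C)ρ_A ≤ ρ_B ≤ Cρ_A pointwise) if and only if sup_{k ∈ ℤ} ‖A^{-k} B^{⌊ck⌋}‖ < ∞, where c = ln|det A| / ln|det B|. -/
open MeasureTheory
open scoped Pointwise

/-- A real matrix is expansive if it is invertible and all its complex eigenvalues
have absolute value strictly greater than `1`. -/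
def Expansive {d : ℕ} (A : Matrix (Fin d) (Fin d) ℝ) : Prop :=
  IsUnit A ∧ ∀ μ ∈ spectrum ℂ (A.map (algebraMap ℝ ℂ)), 1 < ‖μ‖

/-- The action of a matrix on Euclidean space. -/
def ms {d : ℕ} (A : Matrix (Fin d) (Fin d) ℝ) (x : EuclideanSpace ℝ (Fin d)) :
    EuclideanSpace ℝ (Fin d) := WithLp.toLp 2 (A.mulVec x)

/-- An ellipsoid of volume one satisfying `Ω ⊆ rΩ ⊆ AΩ` for some `r > 1`. -/
def IsExpansiveEllipsoid {d : ℕ} (A : Matrix (Fin d) (Fin d) ℝ)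
    (Ω : Set (EuclideanSpace ℝ (Fin d))) : Prop :=
  (∃ P : Matrix (Fin d) (Fin d) ℝ, IsUnit P ∧ Ω = {x | ‖ms P x‖ < 1}) ∧
    volume Ω = 1 ∧ ∃ r : ℝ, 1 < r ∧ Ω ⊆ r • Ω ∧ r • Ω ⊆ ms A '' Ω

/-- The step homogeneous quasi-norm of `A` associated to the ellipsoid `Ω`:
`ρ x = |det A| ^ i` for `x ∈ A^{i+1} Ω \ A^i Ω`, and `ρ 0 = 0`. -/
def IsStepQuasiNorm {d : ℕ} (A : Matrix (Fin d) (Fin d) ℝ)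
    (Ω : Set (EuclideanSpace ℝ (Fin d))) (ρ : EuclideanSpace ℝ (Fin d) → ℝ) : Prop :=
  ρ 0 = 0 ∧ ∀ i : ℤ, ∀ x ∈ ms (A ^ (i + 1)) '' Ω \ ms (A ^ i) '' Ω, ρ x = |A.det| ^ i

attribute [local instance] Matrix.linftyOpNormedAddCommGroup

/-!
The dilates `A ^ i Ω_A` are nested, exhaust the space and shrink to `0`, and `ρ_A` reads them
off: `x ∈ A ^ i Ω_A ↔ ρ_A x < |det A| ^ i`. So `ρ_A ≤ C ρ_B` says exactly that
`B ^ j Ω_B ⊆ A ^ i Ω_A` whenever `C |det B| ^ j < |det A| ^ i`. As `|det B| ^ ⌊c k⌋` and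
`|det A| ^ k` agree up to a factor `|det B|`, equivalence of the quasi-norms amounts to
`B ^ ⌊c k⌋ Ω_B ⊆ A ^ (k + l) Ω_A` and `A ^ k Ω_A ⊆ B ^ (⌊c k⌋ + l) Ω_B` for a fixed `l`, that is,
to `T_k = A ^ (-k) B ^ ⌊c k⌋` and `T_k⁻¹` mapping a fixed ellipsoid into a fixed bounded set.
A bound on `T_k` bounds `T_k⁻¹` as well, since `|det T_k| ≥ |det B|⁻¹`.
-/

open Metric Bornology

variable {d : ℕ}

lemma ms_mul (M N : Matrix (Fin d) (Fin d) ℝ) (x : EuclideanSpace ℝ (Fin d)) :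
    ms (M * N) x = ms M (ms N x) :=
  congrArg (WithLp.toLp 2) (Matrix.mulVec_mulVec _ M N).symm

lemma ms_one : ms (1 : Matrix (Fin d) (Fin d) ℝ) = id :=
  funext fun _ => congrArg (WithLp.toLp 2) (Matrix.one_mulVec _)

lemma image_ms_image (M N : Matrix (Fin d) (Fin d) ℝ) (s : Set (EuclideanSpace ℝ (Fin d))) :
    ms M '' (ms N '' s) = ms (M * N) '' s := by
  simp only [Set.image_image, ms_mul]

lemma image_ms_smul (M : Matrix (Fin d) (Fin d) ℝ) (t : ℝ) (s : Set (EuclideanSpace ℝ (Fin d))) :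
    ms M '' (t • s) = t • ms M '' s :=
  image_smul_set (Matrix.toEuclideanCLM (𝕜 := ℝ) M) t s

lemma norm_ms_le (M : Matrix (Fin d) (Fin d) ℝ) (x : EuclideanSpace ℝ (Fin d)) :
    ‖ms M x‖ ≤ ‖Matrix.toEuclideanCLM (𝕜 := ℝ) M‖ * ‖x‖ :=
  (Matrix.toEuclideanCLM (𝕜 := ℝ) M).le_opNorm x

lemma ms_zpow_injective {A : Matrix (Fin d) (Fin d) ℝ} (hA : IsUnit A.det) (i : ℤ) :
    Function.Injective (ms (A ^ i)) := fun x y h => by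
  simpa [← ms_mul, Matrix.zpow_neg_mul_zpow_self i hA, ms_one] using congrArg (ms (A ^ (-i))) h

lemma image_zpow_image {A : Matrix (Fin d) (Fin d) ℝ} (hA : IsUnit A.det) (i j : ℤ)
    (s : Set (EuclideanSpace ℝ (Fin d))) :
    ms (A ^ i) '' (ms (A ^ j) '' s) = ms (A ^ (i + j)) '' s := by
  rw [image_ms_image, Matrix.zpow_add hA]

lemma image_zpow_neg_mul_subset_iff {A : Matrix (Fin d) (Fin d) ℝ} (hA : IsUnit A.det)
    (X : Matrix (Fin d) (Fin d) ℝ) (k l : ℤ) (s Ω : Set (EuclideanSpace ℝ (Fin d))) :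
    ms (A ^ (-k) * X) '' s ⊆ ms (A ^ l) '' Ω ↔ ms X '' s ⊆ ms (A ^ (k + l)) '' Ω := by
  rw [← Set.image_subset_image_iff (ms_zpow_injective hA k), image_ms_image, ← mul_assoc,
    ← Matrix.zpow_add hA, add_neg_cancel, zpow_zero, one_mul, image_zpow_image hA]

namespace IsExpansiveEllipsoid

variable {A : Matrix (Fin d) (Fin d) ℝ} {Ω : Set (EuclideanSpace ℝ (Fin d))}

lemma isOpen (hΩ : IsExpansiveEllipsoid A Ω) : IsOpen Ω := by
  obtain ⟨⟨P, -, rfl⟩, -⟩ := hΩ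
  exact isOpen_lt (Matrix.toEuclideanCLM (𝕜 := ℝ) P).continuous.norm continuous_const

lemma zero_mem (hΩ : IsExpansiveEllipsoid A Ω) : (0 : EuclideanSpace ℝ (Fin d)) ∈ Ω := by
  obtain ⟨⟨P, -, rfl⟩, -⟩ := hΩ
  simp [ms]

lemma isBounded (hΩ : IsExpansiveEllipsoid A Ω) : IsBounded Ω := by
  obtain ⟨⟨P, hP, rfl⟩, -⟩ := hΩ
  have hPinv : P⁻¹ * P = 1 := Matrix.nonsing_inv_mul P ((Matrix.isUnit_iff_isUnit_det P).mp hP)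
  refine (isBounded_iff_forall_norm_le).mpr
    ⟨‖Matrix.toEuclideanCLM (𝕜 := ℝ) P⁻¹‖, fun x (hx : ‖ms P x‖ < 1) => ?_⟩
  calc ‖x‖ = ‖ms P⁻¹ (ms P x)‖ := by rw [← ms_mul, hPinv, ms_one, id]
    _ ≤ ‖Matrix.toEuclideanCLM (𝕜 := ℝ) P⁻¹‖ * ‖ms P x‖ := norm_ms_le _ _
    _ ≤ ‖Matrix.toEuclideanCLM (𝕜 := ℝ) P⁻¹‖ := mul_le_of_le_one_right (norm_nonneg _) hx.le

lemma subset_image (hΩ : IsExpansiveEllipsoid A Ω) : Ω ⊆ ms A '' Ω := by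
  obtain ⟨-, -, r, -, h₁, h₂⟩ := hΩ
  exact h₁.trans h₂

/-- `|det A|` is the volume of `A Ω ⊇ r Ω`, a set of volume `r ^ d`. -/
lemma exists_pow_le_abs_det (hΩ : IsExpansiveEllipsoid A Ω) :
    ∃ r : ℝ, 1 < r ∧ r ^ d ≤ |A.det| := by
  obtain ⟨-, hvol, r, hr, -, hrA⟩ := hΩ
  refine ⟨r, hr, ?_⟩
  have h := measure_mono (μ := volume) hrA
  rw [Measure.addHaar_smul, hvol, finrank_euclideanSpace_fin,
    show ms A = Matrix.toEuclideanLin A from rfl, Measure.addHaar_image_linearMap, hvol] at h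
  simpa [Matrix.toEuclideanLin, abs_of_pos (zero_lt_one.trans hr),
    ENNReal.ofReal_le_ofReal_iff (abs_nonneg _)] using h

lemma isUnit_det (hΩ : IsExpansiveEllipsoid A Ω) : IsUnit A.det := by
  obtain ⟨r, hr, h⟩ := hΩ.exists_pow_le_abs_det
  exact (abs_pos.mp ((pow_pos (zero_lt_one.trans hr) d).trans_le h)).isUnit

lemma one_lt_abs_det (hΩ : IsExpansiveEllipsoid A Ω) (hd : 0 < d) : 1 < |A.det| := by
  obtain ⟨r, hr, h⟩ := hΩ.exists_pow_le_abs_det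
  exact (one_lt_pow₀ hr hd.ne').trans_le h

lemma monotone_image_zpow (hΩ : IsExpansiveEllipsoid A Ω) :
    Monotone fun i : ℤ => ms (A ^ i) '' Ω :=
  monotone_int_of_le_succ fun i => by
    have h := Set.image_mono (f := ms (A ^ i)) hΩ.subset_image
    rwa [image_ms_image, ← Matrix.zpow_add_one hΩ.isUnit_det] at h

lemma exists_pow_smul_subset (hΩ : IsExpansiveEllipsoid A Ω) :
    ∃ r : ℝ, 1 < r ∧ ∀ n : ℕ, r ^ n • Ω ⊆ ms (A ^ (n : ℤ)) '' Ω := by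
  have hA := hΩ.isUnit_det
  obtain ⟨-, -, r, hr, -, hrA⟩ := hΩ
  refine ⟨r, hr, fun n => ?_⟩
  induction n with
  | zero => simp [ms_one]
  | succ n ih =>
    calc r ^ (n + 1) • Ω = r • r ^ n • Ω := by rw [pow_succ', mul_smul]
      _ ⊆ r • ms (A ^ (n : ℤ)) '' Ω := Set.smul_set_mono ih
      _ ⊆ ms (A ^ (n : ℤ)) '' (ms A '' Ω) := by
        rw [← image_ms_smul]; exact Set.image_mono hrA
      _ = ms (A ^ ((n + 1 : ℕ) : ℤ)) '' Ω := by
        rw [image_ms_image, Nat.cast_succ, Matrix.zpow_add_one hA]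

lemma exists_ball_subset (hΩ : IsExpansiveEllipsoid A Ω) (R : ℝ) :
    ∃ i : ℤ, ball 0 R ⊆ ms (A ^ i) '' Ω := by
  obtain ⟨ε, hε, hεΩ⟩ := Metric.isOpen_iff.mp hΩ.isOpen 0 hΩ.zero_mem
  obtain ⟨r, hr, hrΩ⟩ := hΩ.exists_pow_smul_subset
  obtain ⟨n, hn⟩ := pow_unbounded_of_one_lt (R / ε) hr
  refine ⟨n, ?_⟩
  have hrn : 0 < r ^ n := pow_pos (zero_lt_one.trans hr) n
  calc ball (0 : EuclideanSpace ℝ (Fin d)) R ⊆ ball 0 (r ^ n * ε) :=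
        ball_subset_ball ((div_lt_iff₀ hε).mp hn).le
    _ = r ^ n • ball 0 ε := by
      rw [_root_.smul_ball hrn.ne', smul_zero, Real.norm_of_nonneg hrn.le]
    _ ⊆ r ^ n • Ω := Set.smul_set_mono hεΩ
    _ ⊆ _ := hrΩ n

lemma exists_notMem (hΩ : IsExpansiveEllipsoid A Ω) {x : EuclideanSpace ℝ (Fin d)} (hx : x ≠ 0) :
    ∃ i : ℤ, x ∉ ms (A ^ i) '' Ω := by
  obtain ⟨R, hR⟩ := (isBounded_iff_forall_norm_le).mp hΩ.isBounded
  obtain ⟨r, hr, hrΩ⟩ := hΩ.exists_pow_smul_subset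
  obtain ⟨n, hn⟩ := pow_unbounded_of_one_lt (R / ‖x‖) hr
  refine ⟨-n, fun hxn => ?_⟩
  have hmem : r ^ n • x ∈ Ω := by
    have h := Set.image_mono (f := ms (A ^ (-(n : ℤ)))) (hrΩ n)
    rw [image_ms_smul, image_zpow_image hΩ.isUnit_det, neg_add_cancel, zpow_zero, ms_one,
      Set.image_id] at h
    exact h (Set.smul_mem_smul_set hxn)
  have := hR _ hmem
  rw [norm_smul, Real.norm_of_nonneg (pow_pos (zero_lt_one.trans hr) n).le] at this
  exact (div_lt_iff₀ (norm_pos_iff.mpr hx)).mp hn |>.not_ge this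

lemma exists_mem_diff (hΩ : IsExpansiveEllipsoid A Ω) {x : EuclideanSpace ℝ (Fin d)}
    (hx : x ≠ 0) : ∃ j : ℤ, x ∈ ms (A ^ (j + 1)) '' Ω \ ms (A ^ j) '' Ω := by
  obtain ⟨i₀, hi₀⟩ := hΩ.exists_ball_subset (‖x‖ + 1)
  have hx₀ : x ∈ ms (A ^ i₀) '' Ω := hi₀ (mem_ball_zero_iff.mpr (lt_add_one _))
  have hbdd : ∀ i, x ∉ ms (A ^ i) '' Ω → i ≤ i₀ := fun i hi => by
    by_contra! h
    exact hi (hΩ.monotone_image_zpow h.le hx₀)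
  obtain ⟨j, hj, hmax⟩ := Int.exists_greatest_of_bdd ⟨i₀, hbdd⟩ (hΩ.exists_notMem hx)
  exact ⟨j, by_contra fun h => (hmax (j + 1) h).not_gt (lt_add_one j), hj⟩

lemma exists_image_subset_of_isBounded {ι : Type*} (hΩ : IsExpansiveEllipsoid A Ω)
    {s : Set (EuclideanSpace ℝ (Fin d))} (hs : IsBounded s) {T : ι → Matrix (Fin d) (Fin d) ℝ}
    (hT : IsBounded (Set.range fun i => Matrix.toEuclideanCLM (𝕜 := ℝ) (T i))) :
    ∃ l : ℤ, ∀ i, ms (T i) '' s ⊆ ms (A ^ l) '' Ω := by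
  obtain ⟨R, hR⟩ := isBounded_iff_forall_norm_le.mp hs
  obtain ⟨M, hM⟩ := isBounded_iff_forall_norm_le.mp hT
  obtain ⟨l, hl⟩ := hΩ.exists_ball_subset (M * R + 1)
  refine ⟨l, fun i => ?_⟩
  rintro _ ⟨x, hx, rfl⟩
  have hMi := hM _ ⟨i, rfl⟩
  refine hl (mem_ball_zero_iff.mpr ?_)
  calc ‖ms (T i) x‖ ≤ ‖Matrix.toEuclideanCLM (𝕜 := ℝ) (T i)‖ * ‖x‖ := norm_ms_le _ _
    _ ≤ M * R := mul_le_mul hMi (hR x hx) (norm_nonneg _) ((norm_nonneg _).trans hMi)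
    _ < M * R + 1 := lt_add_one _

lemma isBounded_range_of_image_subset {ι : Type*} (hΩ : IsExpansiveEllipsoid A Ω)
    {t : Set (EuclideanSpace ℝ (Fin d))} (ht : IsBounded t) {T : ι → Matrix (Fin d) (Fin d) ℝ}
    (hT : ∀ i, ms (T i) '' Ω ⊆ t) :
    IsBounded (Set.range fun i => Matrix.toEuclideanCLM (𝕜 := ℝ) (T i)) := by
  obtain ⟨ε, hε, hεΩ⟩ := Metric.isOpen_iff.mp hΩ.isOpen 0 hΩ.zero_mem
  obtain ⟨R, hR0, hR⟩ := ht.subset_closedBall_lt 0 0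
  refine isBounded_iff_forall_norm_le.mpr ⟨2 * R / ε, ?_⟩
  rintro _ ⟨i, rfl⟩
  refine ContinuousLinearMap.opNorm_le_of_shell hε (by positivity) (c := (2 : ℝ)) (by norm_num)
    fun x hx₁ hx₂ => ?_
  have hTx : ‖ms (T i) x‖ ≤ R :=
    mem_closedBall_zero_iff.mp (hR (hT i ⟨x, hεΩ (mem_ball_zero_iff.mpr hx₂), rfl⟩))
  calc ‖ms (T i) x‖ ≤ R := hTx
    _ = 2 * R / ε * (ε / 2) := by field_simp
    _ ≤ 2 * R / ε * ‖x‖ := by gcongr; simpa using hx₁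

end IsExpansiveEllipsoid

namespace IsStepQuasiNorm

variable {A B : Matrix (Fin d) (Fin d) ℝ} {Ω ΩB : Set (EuclideanSpace ℝ (Fin d))}
  {ρ σ : EuclideanSpace ℝ (Fin d) → ℝ}

lemma exists_eq_zpow (hρ : IsStepQuasiNorm A Ω ρ) (hΩ : IsExpansiveEllipsoid A Ω)
    {x : EuclideanSpace ℝ (Fin d)} (hx : x ≠ 0) :
    ∃ j : ℤ, ρ x = |A.det| ^ j ∧ x ∈ ms (A ^ (j + 1)) '' Ω \ ms (A ^ j) '' Ω := by
  obtain ⟨j, hj⟩ := hΩ.exists_mem_diff hx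
  exact ⟨j, hρ.2 j x hj, hj⟩

lemma nonneg (hρ : IsStepQuasiNorm A Ω ρ) (hΩ : IsExpansiveEllipsoid A Ω)
    (x : EuclideanSpace ℝ (Fin d)) : 0 ≤ ρ x := by
  rcases eq_or_ne x 0 with rfl | hx
  · exact hρ.1.ge
  · obtain ⟨j, hj, -⟩ := hρ.exists_eq_zpow hΩ hx
    rw [hj]
    positivity

lemma mem_image_zpow_iff (hρ : IsStepQuasiNorm A Ω ρ) (hΩ : IsExpansiveEllipsoid A Ω)
    (hd : 0 < d) {x : EuclideanSpace ℝ (Fin d)} {i : ℤ} :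
    x ∈ ms (A ^ i) '' Ω ↔ ρ x < |A.det| ^ i := by
  have ha := hΩ.one_lt_abs_det hd
  rcases eq_or_ne x 0 with rfl | hx
  · rw [hρ.1]
    exact iff_of_true ⟨0, hΩ.zero_mem, by simp [ms]⟩ (zpow_pos (zero_lt_one.trans ha) i)
  obtain ⟨j, hj, hj₁, hj₀⟩ := hρ.exists_eq_zpow hΩ hx
  rw [hj, zpow_lt_zpow_iff_right₀ ha]
  constructor
  · intro hi
    by_contra! h
    exact hj₀ (hΩ.monotone_image_zpow h hi)
  · exact fun h => hΩ.monotone_image_zpow (Int.add_one_le_of_lt h) hj₁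

lemma image_zpow_subset_of_le (hρ : IsStepQuasiNorm A Ω ρ) (hσ : IsStepQuasiNorm B ΩB σ)
    (hΩ : IsExpansiveEllipsoid A Ω) (hΩB : IsExpansiveEllipsoid B ΩB) (hd : 0 < d) {C : ℝ}
    (hC0 : 0 ≤ C) (hC : ∀ x, ρ x ≤ C * σ x) {i j : ℤ} (hij : C * |B.det| ^ j < |A.det| ^ i) :
    ms (B ^ j) '' ΩB ⊆ ms (A ^ i) '' Ω := fun x hx =>
  (hρ.mem_image_zpow_iff hΩ hd).mpr <| (hC x).trans_lt <|
    (mul_le_mul_of_nonneg_left ((hσ.mem_image_zpow_iff hΩB hd).mp hx).le hC0).trans_lt hij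

lemma le_mul_of_forall_image_zpow_subset (hρ : IsStepQuasiNorm A Ω ρ)
    (hσ : IsStepQuasiNorm B ΩB σ) (hΩ : IsExpansiveEllipsoid A Ω) (hΩB : IsExpansiveEllipsoid B ΩB)
    (hd : 0 < d) {K : ℝ}
    (h : ∀ i : ℤ, ∃ j : ℤ, ms (A ^ i) '' Ω ⊆ ms (B ^ j) '' ΩB ∧ |B.det| ^ j ≤ K * |A.det| ^ i)
    (x : EuclideanSpace ℝ (Fin d)) : σ x ≤ K * |A.det| * ρ x := by
  rcases eq_or_ne x 0 with rfl | hx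
  · rw [hρ.1, hσ.1, mul_zero]
  obtain ⟨i, hi, hxi, -⟩ := hρ.exists_eq_zpow hΩ hx
  obtain ⟨j, hsub, hj⟩ := h (i + 1)
  calc σ x ≤ |B.det| ^ j := ((hσ.mem_image_zpow_iff hΩB hd).mp (hsub hxi)).le
    _ ≤ K * |A.det| ^ (i + 1) := hj
    _ = K * |A.det| * ρ x := by
      rw [hi, zpow_add_one₀ (abs_pos.mpr hΩ.isUnit_det.ne_zero).ne', mul_comm _ |A.det|, mul_assoc]

end IsStepQuasiNorm

section LogRatio

variable {a b : ℝ}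

lemma rpow_log_div_log_mul (ha : 0 < a) (hb : 1 < b) (t : ℝ) :
    b ^ (Real.log a / Real.log b * t) = a ^ t := by
  rw [Real.rpow_mul (zero_lt_one.trans hb).le, Real.log_div_log,
    Real.rpow_logb (zero_lt_one.trans hb) hb.ne' ha]

lemma zpow_floor_log_div_log_mul_le (ha : 0 < a) (hb : 1 < b) (k : ℤ) :
    b ^ ⌊Real.log a / Real.log b * k⌋ ≤ a ^ k := by
  rw [← Real.rpow_intCast, ← Real.rpow_intCast, ← rpow_log_div_log_mul ha hb]
  exact Real.rpow_le_rpow_of_exponent_le hb.le (Int.floor_le _)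

lemma zpow_le_mul_zpow_floor_log_div_log_mul (ha : 0 < a) (hb : 1 < b) (k : ℤ) :
    a ^ k ≤ b * b ^ ⌊Real.log a / Real.log b * k⌋ := by
  rw [← zpow_one_add₀ (zero_lt_one.trans hb).ne', ← Real.rpow_intCast, ← Real.rpow_intCast,
    ← rpow_log_div_log_mul ha hb]
  refine Real.rpow_le_rpow_of_exponent_le hb.le ?_
  push_cast
  linarith [Int.lt_floor_add_one (Real.log a / Real.log b * k)]

lemma exists_le_floor_log_div_log_mul (ha : 1 < a) (hb : 1 < b) (j : ℤ) :
    ∃ k : ℤ, j ≤ ⌊Real.log a / Real.log b * k⌋ ∧ a ^ k ≤ a * b ^ j := by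
  have hc : 0 < Real.log a / Real.log b := div_pos (Real.log_pos ha) (Real.log_pos hb)
  refine ⟨⌈j / (Real.log a / Real.log b)⌉, Int.le_floor.mpr ?_, ?_⟩
  · rw [← div_le_iff₀' hc]
    exact Int.le_ceil _
  · have hb0 := zero_lt_one.trans hb
    rw [← Real.rpow_intCast, ← Real.rpow_intCast, ← rpow_log_div_log_mul (zero_lt_one.trans ha) hb]
    calc b ^ (Real.log a / Real.log b * ⌈(j : ℝ) / (Real.log a / Real.log b)⌉)
        ≤ b ^ (Real.log a / Real.log b + j) := by
          refine Real.rpow_le_rpow_of_exponent_le hb.le ?_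
          have := Int.ceil_lt_add_one ((j : ℝ) / (Real.log a / Real.log b))
          calc Real.log a / Real.log b * ⌈(j : ℝ) / (Real.log a / Real.log b)⌉
              ≤ Real.log a / Real.log b * ((j : ℝ) / (Real.log a / Real.log b) + 1) := by gcongr
            _ = Real.log a / Real.log b + j := by
              rw [mul_add, mul_div_cancel₀ _ hc.ne', mul_one, add_comm]
      _ = a * b ^ (j : ℝ) := by
          rw [Real.rpow_add hb0, Real.log_div_log, Real.rpow_logb hb0 hb.ne' (zero_lt_one.trans ha)]

end LogRatio

namespace Matrix

variable {n : Type*} [Fintype n] [DecidableEq n]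

lemma det_zpow {K : Type*} [Field K] {A : Matrix n n K} (hA : IsUnit A.det) (k : ℤ) :
    (A ^ k).det = A.det ^ k := by
  induction k using Int.induction_on with
  | zero => simp
  | succ k ih => rw [zpow_add_one hA, det_mul, ih, zpow_add_one₀ hA.ne_zero]
  | pred k ih =>
    rw [zpow_sub_one hA, det_mul, ih, det_nonsing_inv, Ring.inverse_eq_inv',
      zpow_sub_one₀ hA.ne_zero]

section

attribute [local instance] Matrix.linftyOpNormedSpace

lemma isBounded_range_toEuclideanCLM_iff {ι : Type*} (T : ι → Matrix n n ℝ) :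
    IsBounded (Set.range fun i => toEuclideanCLM (𝕜 := ℝ) (T i)) ↔ IsBounded (Set.range T) := by
  let e := (toEuclideanCLM (𝕜 := ℝ) (n := n)).toAlgEquiv.toLinearEquiv.toContinuousLinearEquiv
  change IsBounded (Set.range (e ∘ T)) ↔ _
  rw [Set.range_comp]
  refine ⟨fun hb => ?_, fun hb => e.lipschitz.isBounded_image hb⟩
  rw [← e.symm_image_image (Set.range T)]
  exact e.symm.lipschitz.isBounded_image hb

/-- Inversion is continuous on the compact set of matrices of norm `≤ M` and `|det| ≥ δ`. -/
lemma isBounded_range_inv {ι : Type*} {T : ι → Matrix n n ℝ} (hT : IsBounded (Set.range T))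
    {δ : ℝ} (hδ : 0 < δ) (hdet : ∀ i, δ ≤ |(T i).det|) :
    IsBounded (Set.range fun i => (T i)⁻¹) := by
  have : ProperSpace (Matrix n n ℝ) := FiniteDimensional.proper_real _
  obtain ⟨M, hM⟩ := hT.subset_closedBall 0
  set S := closedBall (0 : Matrix n n ℝ) M ∩ {T | δ ≤ |T.det|}
  have hS : IsCompact S := (isCompact_closedBall 0 M).inter_right
    (isClosed_le continuous_const continuous_id.matrix_det.abs)
  have hinv : ContinuousOn Inv.inv S := fun T hT => (continuousAt_matrix_inv T
    (NormedRing.inverse_continuousAt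
      (Units.mk0 _ (abs_pos.mp (hδ.trans_le hT.2))))).continuousWithinAt
  refine (hS.image_of_continuousOn hinv).isBounded.subset ?_
  rintro _ ⟨i, rfl⟩
  exact ⟨T i, ⟨hM ⟨i, rfl⟩, hdet i⟩, rfl⟩

end

end Matrix

lemma isBounded_range_iff_forall_norm_le {E ι : Type*} [SeminormedAddCommGroup E] {f : ι → E} :
    IsBounded (Set.range f) ↔ ∃ C, ∀ i, ‖f i‖ ≤ C := by
  simp only [isBounded_iff_forall_norm_le, Set.forall_mem_range]

section Comparison

variable {A B : Matrix (Fin d) (Fin d) ℝ} {ΩA ΩB : Set (EuclideanSpace ℝ (Fin d))}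
  {ρA ρB : EuclideanSpace ℝ (Fin d) → ℝ}

theorem isBounded_range_of_le_mul (hρA : IsStepQuasiNorm A ΩA ρA)
    (hρB : IsStepQuasiNorm B ΩB ρB) (hΩA : IsExpansiveEllipsoid A ΩA)
    (hΩB : IsExpansiveEllipsoid B ΩB) (hd : 0 < d) {C : ℝ} (hC0 : 0 ≤ C)
    (hC : ∀ x, ρA x ≤ C * ρB x) :
    IsBounded (Set.range fun k : ℤ =>
      A ^ (-k) * B ^ ⌊Real.log |A.det| / Real.log |B.det| * (k : ℝ)⌋) := by
  have ha := hΩA.one_lt_abs_det hd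
  obtain ⟨N, hN⟩ := pow_unbounded_of_one_lt C ha
  rw [← Matrix.isBounded_range_toEuclideanCLM_iff]
  refine hΩB.isBounded_range_of_image_subset
    ((Matrix.toEuclideanCLM (𝕜 := ℝ) (A ^ (N : ℤ))).lipschitz.isBounded_image hΩA.isBounded)
    fun k => ?_
  change _ ⊆ ms (A ^ (N : ℤ)) '' ΩA
  rw [image_zpow_neg_mul_subset_iff hΩA.isUnit_det]
  refine hρA.image_zpow_subset_of_le hρB hΩA hΩB hd hC0 hC ?_
  calc C * |B.det| ^ ⌊Real.log |A.det| / Real.log |B.det| * (k : ℝ)⌋ ≤ C * |A.det| ^ k :=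
        mul_le_mul_of_nonneg_left
          (zpow_floor_log_div_log_mul_le (zero_lt_one.trans ha) (hΩB.one_lt_abs_det hd) k) hC0
    _ < |A.det| ^ N * |A.det| ^ k := mul_lt_mul_of_pos_right hN (zpow_pos (zero_lt_one.trans ha) k)
    _ = |A.det| ^ (k + N) := by rw [zpow_add₀ (zero_lt_one.trans ha).ne', zpow_natCast, mul_comm]

theorem exists_le_mul_of_isBounded_range (hρA : IsStepQuasiNorm A ΩA ρA)
    (hρB : IsStepQuasiNorm B ΩB ρB) (hΩA : IsExpansiveEllipsoid A ΩA)
    (hΩB : IsExpansiveEllipsoid B ΩB) (hd : 0 < d)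
    (hT : IsBounded (Set.range fun k : ℤ =>
      A ^ (-k) * B ^ ⌊Real.log |A.det| / Real.log |B.det| * (k : ℝ)⌋)) :
    ∃ K : ℝ, ∀ x, ρA x ≤ K * ρB x := by
  have ha := hΩA.one_lt_abs_det hd
  obtain ⟨l, hl⟩ := hΩA.exists_image_subset_of_isBounded hΩB.isBounded
    ((Matrix.isBounded_range_toEuclideanCLM_iff _).mpr hT)
  refine ⟨|A.det| ^ l * |A.det| * |B.det|,
    hρB.le_mul_of_forall_image_zpow_subset hρA hΩB hΩA hd fun j => ?_⟩
  obtain ⟨k, hjk, hk⟩ := exists_le_floor_log_div_log_mul ha (hΩB.one_lt_abs_det hd) j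
  refine ⟨k + l, (hΩB.monotone_image_zpow hjk).trans
    ((image_zpow_neg_mul_subset_iff hΩA.isUnit_det _ _ _ _ _).mp (hl k)), ?_⟩
  calc |A.det| ^ (k + l) = |A.det| ^ l * |A.det| ^ k := by
        rw [zpow_add₀ (zero_lt_one.trans ha).ne', mul_comm]
    _ ≤ |A.det| ^ l * (|A.det| * |B.det| ^ j) := by gcongr
    _ = _ := by ring

theorem exists_le_mul_of_isBounded_range_inv (hρA : IsStepQuasiNorm A ΩA ρA)
    (hρB : IsStepQuasiNorm B ΩB ρB) (hΩA : IsExpansiveEllipsoid A ΩA)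
    (hΩB : IsExpansiveEllipsoid B ΩB) (hd : 0 < d)
    (hT : IsBounded (Set.range fun k : ℤ =>
      A ^ (-k) * B ^ ⌊Real.log |A.det| / Real.log |B.det| * (k : ℝ)⌋)) :
    ∃ K : ℝ, ∀ x, ρB x ≤ K * ρA x := by
  have hA := hΩA.isUnit_det
  have hB := hΩB.isUnit_det
  have ha := hΩA.one_lt_abs_det hd
  have hb := hΩB.one_lt_abs_det hd
  set m : ℤ → ℤ := fun k => ⌊Real.log |A.det| / Real.log |B.det| * (k : ℝ)⌋
  have hinv : ∀ k, (A ^ (-k) * B ^ m k)⁻¹ = B ^ (-m k) * A ^ k := fun k => by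
    rw [Matrix.mul_inv_rev, ← Matrix.zpow_neg hB, ← Matrix.zpow_neg hA, neg_neg]
  have hdet : ∀ k, |B.det|⁻¹ ≤ |(A ^ (-k) * B ^ m k).det| := fun k => by
    rw [Matrix.det_mul, Matrix.det_zpow hA, Matrix.det_zpow hB, abs_mul, abs_zpow, abs_zpow,
      zpow_neg, inv_mul_eq_div, le_div_iff₀ (zpow_pos (zero_lt_one.trans ha) k),
      inv_mul_le_iff₀ (zero_lt_one.trans hb)]
    exact zpow_le_mul_zpow_floor_log_div_log_mul (zero_lt_one.trans ha) hb k
  have hT' : IsBounded (Set.range fun k => B ^ (-m k) * A ^ k) := by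
    convert Matrix.isBounded_range_inv hT (inv_pos.mpr (zero_lt_one.trans hb)) hdet using 3 with k
    exact (hinv k).symm
  obtain ⟨l, hl⟩ := hΩB.exists_image_subset_of_isBounded hΩA.isBounded
    ((Matrix.isBounded_range_toEuclideanCLM_iff _).mpr hT')
  refine ⟨|B.det| ^ l * |A.det|,
    hρA.le_mul_of_forall_image_zpow_subset hρB hΩA hΩB hd fun k => ⟨m k + l, ?_, ?_⟩⟩
  · simpa only [zpow_one] using (image_zpow_neg_mul_subset_iff hB _ _ _ _ _).mp (hl k)
  · calc |B.det| ^ (m k + l) = |B.det| ^ l * |B.det| ^ m k := by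
          rw [zpow_add₀ (zero_lt_one.trans hb).ne', mul_comm]
      _ ≤ |B.det| ^ l * |A.det| ^ k := by
          gcongr
          exact zpow_floor_log_div_log_mul_le (zero_lt_one.trans ha) hb k

end Comparison

theorem stmt2_general {d : ℕ} (A B : Matrix (Fin d) (Fin d) ℝ)
    (ΩA ΩB : Set (EuclideanSpace ℝ (Fin d)))
    (hΩA : IsExpansiveEllipsoid A ΩA) (hΩB : IsExpansiveEllipsoid B ΩB)
    (ρA ρB : EuclideanSpace ℝ (Fin d) → ℝ)
    (hρA : IsStepQuasiNorm A ΩA ρA) (hρB : IsStepQuasiNorm B ΩB ρB) :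
    (∃ C : ℝ, 1 ≤ C ∧ ∀ x, (1 / C) * ρA x ≤ ρB x ∧ ρB x ≤ C * ρA x) ↔
      (∃ M : ℝ, ∀ k : ℤ,
        ‖A ^ (-k) * B ^ ⌊Real.log |A.det| / Real.log |B.det| * (k : ℝ)⌋‖ ≤ M) := by
  rcases Nat.eq_zero_or_pos d with rfl | hd
  -- in dimension `0` both determinants are `1`; both sides hold trivially
  · exact ⟨fun _ => ⟨0, fun k => by simp [Subsingleton.elim (_ : Matrix (Fin 0) (Fin 0) ℝ) 0]⟩,
      fun _ => ⟨1, le_rfl, fun x => by simp [Subsingleton.elim x 0, hρA.1, hρB.1]⟩⟩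
  rw [← isBounded_range_iff_forall_norm_le]
  constructor
  · rintro ⟨C, hC1, hC⟩
    refine isBounded_range_of_le_mul hρA hρB hΩA hΩB hd (zero_le_one.trans hC1) fun x => ?_
    simpa only [one_div, inv_mul_le_iff₀ (zero_lt_one.trans_le hC1)] using (hC x).1
  · intro hT
    obtain ⟨K₁, hK₁⟩ := exists_le_mul_of_isBounded_range hρA hρB hΩA hΩB hd hT
    obtain ⟨K₂, hK₂⟩ := exists_le_mul_of_isBounded_range_inv hρA hρB hΩA hΩB hd hT
    set C := max 1 (max K₁ K₂)
    have hC : 0 < C := zero_lt_one.trans_le (le_max_left _ _)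
    refine ⟨C, le_max_left _ _, fun x => ⟨?_, ?_⟩⟩
    · rw [one_div, inv_mul_le_iff₀ hC]
      exact (hK₁ x).trans
        (by gcongr; exacts [hρB.nonneg hΩB x, le_max_of_le_right (le_max_left ..)])
    · exact (hK₂ x).trans
        (by gcongr; exacts [hρA.nonneg hΩA x, le_max_of_le_right (le_max_right ..)])

/-- Two expansive matrices have equivalent step homogeneous quasi-norms if and only if
`sup_{k ∈ ℤ} ‖A^{-k} B^{⌊ck⌋}‖ < ∞`, where `c = ln |det A| / ln |det B|`. -/
theorem stmt2 {d : ℕ} (A B : Matrix (Fin d) (Fin d) ℝ)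
    (hA : Expansive A) (hB : Expansive B)
    (ΩA ΩB : Set (EuclideanSpace ℝ (Fin d)))
    (hΩA : IsExpansiveEllipsoid A ΩA) (hΩB : IsExpansiveEllipsoid B ΩB)
    (ρA ρB : EuclideanSpace ℝ (Fin d) → ℝ)
    (hρA : IsStepQuasiNorm A ΩA ρA) (hρB : IsStepQuasiNorm B ΩB ρB) :
    (∃ C : ℝ, 1 ≤ C ∧ ∀ x, (1 / C) * ρA x ≤ ρB x ∧ ρB x ≤ C * ρA x) ↔
      (∃ M : ℝ, ∀ k : ℤ,
        ‖A ^ (-k) * B ^ ⌊Real.log |A.det| / Real.log |B.det| * (k : ℝ)⌋‖ ≤ M) :=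
  stmt2_general A B ΩA ΩB hΩA hΩB ρA ρB hρA hρB
end

section
/- Let A, B ∈ GL(d, ℝ) be expansive, α, β ∈ ℝ \ {0}, and Q, P ⊆ ℝ^d open with closures compact in ℝ^d \ {0}. Suppose there exists C > 0 such that (1/C)|det B|^{βj} ≤ |det A|^{αi} ≤ C|det B|^{βj} whenever A^i Q ∩ B^j P ≠ ∅. Then there exists N ∈ ℕ such that for all i, j ∈ ℤ: the set J_i = {j ∈ ℤ : A^iQ ∩ B^jP ≠ ∅} is contained in {j : |j − ⌊(α/β)·c·i⌋| ≤ N}, and the set I_j = {i ∈ ℤ : A^iQ ∩ B^jP ≠ ∅} is contained in {i : |i − ⌊(β/α)·(1/c)·j⌋| ≤ N}, where c = ln|det A| / ln|det B|. -/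
open MeasureTheory
open scoped Pointwise

/-!
Taking logarithms, the hypothesis says `|α i log|det A| - β j log|det B|| ≤ log C` whenever
`A^i Q ∩ B^j P ≠ ∅`. For expansive `A`, `B` in positive dimension both logarithms are positive,
so dividing by `β log|det B|` (resp. `α log|det A|`) puts `j` within a fixed distance of
`(α/β) c i` (resp. `i` within a fixed distance of `(β/α) c⁻¹ j`). As `j` is an integer, a
distance bound `K` from `x` gives the bound `⌈K⌉` from `⌊x⌋`.
-/

theorem Multiset.one_lt_prod_of_one_lt {M₀ : Type*} [CommMonoidWithZero M₀] [PartialOrder M₀]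
    [ZeroLEOneClass M₀] [PosMulMono M₀] {s : Multiset M₀} (hs : s ≠ 0)
    (h : ∀ x ∈ s, 1 < x) : 1 < s.prod := by
  induction s using Multiset.induction_on with
  | empty => exact absurd rfl hs
  | cons a s ih =>
    rw [Multiset.prod_cons]
    rcases eq_or_ne s 0 with rfl | hs'
    · simpa using h a (Multiset.mem_cons_self a 0)
    · exact one_lt_mul_of_lt_of_le (h a (Multiset.mem_cons_self a s))
        (ih hs' fun x hx => h x (Multiset.mem_cons_of_mem hx)).le

theorem Matrix.one_lt_norm_det_of_one_lt_norm_spectrum {n K : Type*} [Fintype n] [DecidableEq n]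
    [Nonempty n] [NormedField K] [IsAlgClosed K] (M : Matrix n n K)
    (h : ∀ μ ∈ spectrum K M, 1 < ‖μ‖) : 1 < ‖M.det‖ := by
  rw [M.det_eq_prod_roots_charpoly]
  change 1 < normHom M.charpoly.roots.prod
  rw [map_multiset_prod]
  refine Multiset.one_lt_prod_of_one_lt ?_ ?_
  · rw [Ne, Multiset.map_eq_zero, ← Multiset.card_eq_zero, IsAlgClosed.card_roots_eq_natDegree,
      M.charpoly_natDegree_eq_dim]
    exact Fintype.card_ne_zero
  · simp only [Multiset.mem_map, forall_exists_index, and_imp, forall_apply_eq_imp_iff₂]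
    exact fun μ hμ => h μ (M.mem_spectrum_of_isRoot_charpoly (Polynomial.isRoot_of_mem_roots hμ))

theorem Expansive.one_lt_abs_det {d : ℕ} [NeZero d] {A : Matrix (Fin d) (Fin d) ℝ}
    (hA : Expansive A) : 1 < |A.det| := by
  have hdet : (A.map (algebraMap ℝ ℂ)).det = A.det := (RingHom.map_det _ A).symm
  have := (A.map (algebraMap ℝ ℂ)).one_lt_norm_det_of_one_lt_norm_spectrum hA.2
  rwa [hdet, Complex.norm_real, Real.norm_eq_abs] at this

theorem abs_log_sub_log_le_log {x y C : ℝ} (hx : 0 < x) (hC : 0 < C)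
    (hlow : 1 / C * x ≤ y) (hup : y ≤ C * x) : |Real.log y - Real.log x| ≤ Real.log C := by
  have hy : 0 < y := (by positivity : 0 < 1 / C * x).trans_le hlow
  have h₁ := Real.log_le_log (by positivity) hlow
  have h₂ := Real.log_le_log hy hup
  rw [Real.log_mul (by positivity) hx.ne', one_div, Real.log_inv] at h₁
  rw [Real.log_mul hC.ne' hx.ne'] at h₂
  exact abs_sub_le_iff.mpr ⟨by linarith, by linarith⟩

theorem abs_sub_div_mul_le_of_abs_mul_sub_mul_le {p q x y M : ℝ} (hq : q ≠ 0)
    (h : |p * x - q * y| ≤ M) : |y - p / q * x| ≤ M / |q| := by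
  rw [show y - p / q * x = (q * y - p * x) / q by field_simp, abs_div, abs_sub_comm]
  gcongr

theorem Int.abs_sub_floor_le_natCeil {n : ℤ} {x K : ℝ} (h : |n - x| ≤ K) :
    |n - ⌊x⌋| ≤ (⌈K⌉₊ : ℤ) := by
  have hK : K ≤ ⌈K⌉₊ := Nat.le_ceil K
  rw [abs_le] at h ⊢
  have h₁ := Int.floor_le x
  have h₂ := Int.lt_floor_add_one x
  constructor
  · have : (-(⌈K⌉₊ : ℤ) : ℝ) ≤ ((n - ⌊x⌋ : ℤ) : ℝ) := by push_cast; linarith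
    exact_mod_cast this
  · have : ((n - ⌊x⌋ : ℤ) : ℝ) < ((⌈K⌉₊ + 1 : ℤ) : ℝ) := by push_cast; linarith
    exact Int.lt_add_one_iff.mp (by exact_mod_cast this)

theorem stmt5_general {d : ℕ} (A B : Matrix (Fin d) (Fin d) ℝ)
    (hA : Expansive A) (hB : Expansive B) (α β : ℝ) (hα : α ≠ 0) (hβ : β ≠ 0)
    (Q P : Set (EuclideanSpace ℝ (Fin d)))
    (hQ0 : (0 : EuclideanSpace ℝ (Fin d)) ∉ closure Q)
    (C : ℝ) (hC : 0 < C)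
    (hbound : ∀ i j : ℤ, (ms (A ^ i) '' Q ∩ ms (B ^ j) '' P).Nonempty →
      (1 / C) * |B.det| ^ (β * j) ≤ |A.det| ^ (α * i) ∧
        |A.det| ^ (α * i) ≤ C * |B.det| ^ (β * j)) :
    ∃ N : ℕ, ∀ i j : ℤ, (ms (A ^ i) '' Q ∩ ms (B ^ j) '' P).Nonempty →
      |j - ⌊α / β * (Real.log |A.det| / Real.log |B.det|) * i⌋| ≤ (N : ℤ) ∧
      |i - ⌊β / α * (Real.log |A.det| / Real.log |B.det|)⁻¹ * j⌋| ≤ (N : ℤ) := by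
  rcases eq_or_ne d 0 with rfl | hd
  · -- the only point of `ℝ^0` is `0`, which lies outside `Q`
    refine ⟨0, fun i j ⟨_, ⟨q, hq, _⟩, _⟩ => absurd (subset_closure hq) ?_⟩
    rwa [Subsingleton.elim q 0]
  have : NeZero d := ⟨hd⟩
  set La := Real.log |A.det|
  set Lb := Real.log |B.det|
  have hLa : 0 < La := Real.log_pos hA.one_lt_abs_det
  have hLb : 0 < Lb := Real.log_pos hB.one_lt_abs_det
  have hlog : ∀ i j : ℤ, (ms (A ^ i) '' Q ∩ ms (B ^ j) '' P).Nonempty →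
      |α * La * i - β * Lb * j| ≤ Real.log C := by
    intro i j hij
    obtain ⟨hlow, hup⟩ := hbound i j hij
    have hb : 0 < |B.det| := one_pos.trans hB.one_lt_abs_det
    have := abs_log_sub_log_le_log (Real.rpow_pos_of_pos hb _) hC hlow hup
    rwa [Real.log_rpow (one_pos.trans hA.one_lt_abs_det), Real.log_rpow hb, mul_right_comm α,
      mul_right_comm β] at this
  refine ⟨max ⌈Real.log C / |β * Lb|⌉₊ ⌈Real.log C / |α * La|⌉₊, fun i j hij => ⟨?_, ?_⟩⟩
  · refine (Int.abs_sub_floor_le_natCeil ?_).trans (by exact_mod_cast le_max_left _ _)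
    rw [show α / β * (La / Lb) = α * La / (β * Lb) by ring]
    exact abs_sub_div_mul_le_of_abs_mul_sub_mul_le (by positivity) (hlog i j hij)
  · refine (Int.abs_sub_floor_le_natCeil ?_).trans (by exact_mod_cast le_max_right _ _)
    rw [show β / α * (La / Lb)⁻¹ = β * Lb / (α * La) by field_simp]
    exact abs_sub_div_mul_le_of_abs_mul_sub_mul_le (by positivity)
      (abs_sub_comm (α * La * i) _ ▸ hlog i j hij)

/-- If `|det A|^{αi} ≍ |det B|^{βj}` whenever `A^i Q ∩ B^j P ≠ ∅`, then the index sets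
`J_i` and `I_j` are contained in intervals of uniformly bounded length around
`⌊(α/β) c i⌋` resp. `⌊(β/α)(1/c) j⌋`, where `c = ln |det A| / ln |det B|`. -/
theorem stmt5 {d : ℕ} (A B : Matrix (Fin d) (Fin d) ℝ)
    (hA : Expansive A) (hB : Expansive B) (α β : ℝ) (hα : α ≠ 0) (hβ : β ≠ 0)
    (Q P : Set (EuclideanSpace ℝ (Fin d))) (hQo : IsOpen Q) (hPo : IsOpen P)
    (hQc : IsCompact (closure Q)) (hPc : IsCompact (closure P))
    (hQ0 : (0 : EuclideanSpace ℝ (Fin d)) ∉ closure Q)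
    (hP0 : (0 : EuclideanSpace ℝ (Fin d)) ∉ closure P)
    (C : ℝ) (hC : 0 < C)
    (hbound : ∀ i j : ℤ, (ms (A ^ i) '' Q ∩ ms (B ^ j) '' P).Nonempty →
      (1 / C) * |B.det| ^ (β * j) ≤ |A.det| ^ (α * i) ∧
        |A.det| ^ (α * i) ≤ C * |B.det| ^ (β * j)) :
    ∃ N : ℕ, ∀ i j : ℤ, (ms (A ^ i) '' Q ∩ ms (B ^ j) '' P).Nonempty →
      |j - ⌊α / β * (Real.log |A.det| / Real.log |B.det|) * i⌋| ≤ (N : ℤ) ∧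
      |i - ⌊β / α * (Real.log |A.det| / Real.log |B.det|)⁻¹ * j⌋| ≤ (N : ℤ) :=
  stmt5_general A B hA hB α β hα hβ Q P hQ0 C hC hbound
end

section
/- Let K₁, K₂ ⊆ ℝ^d be compact sets and p ∈ (0,1]. If f, ψ are Schwartz functions on ℝ^d with supp f̂ ⊆ K₂ and supp ψ̂ ⊆ K₁, then ‖f ∗ ψ‖_{L^p} ≤ [m(K₁ − K₂)]^{1/p − 1} · ‖f‖_{L^p} · ‖ψ‖_{L^p}, where K₁ − K₂ = {u − v : u ∈ K₁, v ∈ K₂} and m denotes Lebesgue measure. -/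
/-!
Fix `x` and put `g(y) = f(y) ψ(x - y)`. By the convolution theorem `ĝ = f̂ ∗ (ψ(x - ·))^`, so `ĝ`
vanishes off `Ω = supp f̂ - supp ψ̂ ⊆ -(K₁ - K₂)`. Fourier inversion then gives the Nikolskii bound
`‖g‖_∞ ≤ m(Ω) ‖g‖₁`, and interpolating `‖g‖₁ ≤ ‖g‖_∞^{1-p} ∫ |g|^p` yields
`|(f ∗ ψ)(x)|^p ≤ ‖g‖₁^p ≤ m(Ω)^{1-p} ∫ |f(y)|^p |ψ(x - y)|^p dy`.
Integrating in `x` (Tonelli) gives the claim.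
-/

open MeasureTheory SchwartzMap Convolution
open scoped Pointwise FourierTransform ENNReal

theorem eLpNorm_ofReal_eq_lintegral {α F : Type*} [MeasurableSpace α] [NormedAddCommGroup F]
    {μ : Measure α} (u : α → F) {p : ℝ} (hp : 0 < p) :
    eLpNorm u (ENNReal.ofReal p) μ = (∫⁻ x, ‖u x‖ₑ ^ p ∂μ) ^ (1 / p) := by
  rw [eLpNorm_eq_lintegral_rpow_enorm_toReal (by simpa using hp) ENNReal.ofReal_ne_top,
    ENNReal.toReal_ofReal hp.le]

theorem lintegral_le_rpow_mul_lintegral_rpow {α : Type*} [MeasurableSpace α] {μ : Measure α}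
    {u : α → ℝ≥0∞} (hu : AEMeasurable u μ) {M : ℝ≥0∞} (hM : ∀ x, u x ≤ M) {p : ℝ}
    (hp0 : 0 ≤ p) (hp1 : p ≤ 1) :
    ∫⁻ x, u x ∂μ ≤ M ^ (1 - p) * ∫⁻ x, u x ^ p ∂μ := by
  have hpt : ∀ x, u x ≤ M ^ (1 - p) * u x ^ p := fun x =>
    calc u x = u x ^ (p + (1 - p)) := by rw [add_sub_cancel, ENNReal.rpow_one]
      _ = u x ^ (1 - p) * u x ^ p := by
        rw [ENNReal.rpow_add_of_nonneg _ _ hp0 (by linarith), mul_comm]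
      _ ≤ M ^ (1 - p) * u x ^ p := by gcongr; exact hM x
  calc ∫⁻ x, u x ∂μ ≤ ∫⁻ x, M ^ (1 - p) * u x ^ p ∂μ := lintegral_mono hpt
    _ = M ^ (1 - p) * ∫⁻ x, u x ^ p ∂μ := lintegral_const_mul'' _ (hu.pow_const p)

theorem lintegral_lintegral_mul_sub {G : Type*} [AddGroup G] [MeasurableSpace G]
    [MeasurableAdd₂ G] [MeasurableNeg G] (μ : Measure G) [SFinite μ] [μ.IsAddRightInvariant]
    {u v : G → ℝ≥0∞} (hu : Measurable u) (hv : Measurable v) :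
    ∫⁻ x, ∫⁻ y, u y * v (x - y) ∂μ ∂μ = (∫⁻ x, u x ∂μ) * ∫⁻ x, v x ∂μ := by
  rw [lintegral_lintegral_swap
    ((hu.comp measurable_snd).mul (hv.comp (measurable_fst.sub measurable_snd))).aemeasurable]
  calc ∫⁻ y, ∫⁻ x, u y * v (x - y) ∂μ ∂μ = ∫⁻ y, u y * ∫⁻ x, v x ∂μ ∂μ :=
        lintegral_congr fun y => by
          rw [lintegral_const_mul (u y) (f := fun x => v (x - y)) (hv.comp (measurable_sub_const y)),
            lintegral_sub_right_eq_self v y]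
    _ = (∫⁻ x, u x ∂μ) * ∫⁻ x, v x ∂μ := lintegral_mul_const _ hu

section Fourier

variable {V E : Type*} [NormedAddCommGroup V] [InnerProductSpace ℝ V] [FiniteDimensional ℝ V]
  [MeasurableSpace V] [BorelSpace V] [NormedAddCommGroup E] [NormedSpace ℂ E]

theorem Real.enorm_fourier_le_lintegral_enorm (f : V → E) (ξ : V) :
    ‖𝓕 f ξ‖ₑ ≤ ∫⁻ v, ‖f v‖ₑ := by
  rw [Real.fourier_eq]
  refine (enorm_integral_le_lintegral_enorm _).trans_eq ?_
  simp only [← ofReal_norm, Circle.norm_smul]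

theorem Real.fourier_comp_sub_left (ψ : V → E) (x ξ : V) :
    𝓕 (fun y => ψ (x - y)) ξ = 𝐞 (-inner ℝ x ξ) • 𝓕 ψ (-ξ) := by
  have h : (fun y => ψ (x - y)) = (fun y => ψ (-y)) ∘ fun y => y + -x := by
    ext y; simp [sub_eq_add_neg]
  have := congrFun
    (VectorFourier.fourierIntegral_comp_add_right 𝐞 volume (innerₗ V) (fun y => ψ (-y)) (-x)) ξ
  rw [h, ← Real.fourierInv_eq_fourier_neg, Real.fourierInv_eq_fourier_comp_neg]
  simp only [innerₗ_apply_apply, inner_neg_left] at this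
  exact this

theorem Real.support_fourier_comp_sub_left (ψ : V → E) (x : V) :
    Function.support (𝓕 (fun y => ψ (x - y))) = -Function.support (𝓕 ψ) := by
  ext ξ
  rw [Set.mem_neg, Function.mem_support, Function.mem_support, Real.fourier_comp_sub_left,
    ← norm_ne_zero_iff, Circle.norm_smul, norm_ne_zero_iff]

variable [CompleteSpace E]

theorem enorm_le_measure_mul_lintegral_enorm_of_support_fourier_subset
    {g : V → E} (hc : Continuous g) (hg : Integrable g) (hFg : Integrable (𝓕 g)) {Ω : Set V}
    (hΩ : Function.support (𝓕 g) ⊆ Ω) (x : V) :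
    ‖g x‖ₑ ≤ volume Ω * ∫⁻ y, ‖g y‖ₑ :=
  calc ‖g x‖ₑ = ‖𝓕 (𝓕 g) (-x)‖ₑ := by
        rw [← Real.fourierInv_eq_fourier_neg, hc.fourierInv_fourier_eq hg hFg]
    _ ≤ ∫⁻ ξ, ‖𝓕 g ξ‖ₑ := Real.enorm_fourier_le_lintegral_enorm _ _
    _ = ∫⁻ ξ in Ω, ‖𝓕 g ξ‖ₑ :=
        (setLIntegral_eq_of_support_subset (by simpa [Function.support] using hΩ)).symm
    _ ≤ ∫⁻ _ in Ω, ∫⁻ y, ‖g y‖ₑ :=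
        lintegral_mono fun ξ => Real.enorm_fourier_le_lintegral_enorm g ξ
    _ = volume Ω * ∫⁻ y, ‖g y‖ₑ := by rw [setLIntegral_const, mul_comm]

theorem rpow_lintegral_enorm_le_of_support_fourier_subset
    {g : V → E} (hc : Continuous g) (hg : Integrable g) (hFg : Integrable (𝓕 g)) {Ω : Set V}
    (hΩ : Function.support (𝓕 g) ⊆ Ω) {p : ℝ} (hp0 : 0 < p) (hp1 : p ≤ 1) :
    (∫⁻ y, ‖g y‖ₑ) ^ p ≤ volume Ω ^ (1 - p) * ∫⁻ y, ‖g y‖ₑ ^ p := by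
  set I := ∫⁻ y, ‖g y‖ₑ
  rcases eq_or_ne I 0 with hI0 | hI0
  · simp [hI0, ENNReal.zero_rpow_of_pos hp0]
  have hIp : I ^ (1 - p) ≠ 0 := by simp [ENNReal.rpow_eq_zero_iff, hI0, hp1]
  have hIt : I ^ (1 - p) ≠ ⊤ := ENNReal.rpow_ne_top_of_nonneg (by linarith) hg.2.ne
  have hL1 : I ≤ (volume Ω * I) ^ (1 - p) * ∫⁻ y, ‖g y‖ₑ ^ p :=
    lintegral_le_rpow_mul_lintegral_rpow hc.enorm.aemeasurable
      (enorm_le_measure_mul_lintegral_enorm_of_support_fourier_subset hc hg hFg hΩ) hp0.le hp1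
  refine (ENNReal.mul_le_mul_iff_left hIp hIt).1 ?_
  calc I ^ p * I ^ (1 - p) = I := by
        rw [← ENNReal.rpow_add_of_nonneg _ _ hp0.le (by linarith), add_sub_cancel, ENNReal.rpow_one]
    _ ≤ (volume Ω * I) ^ (1 - p) * ∫⁻ y, ‖g y‖ₑ ^ p := hL1
    _ = volume Ω ^ (1 - p) * (∫⁻ y, ‖g y‖ₑ ^ p) * I ^ (1 - p) := by
        rw [ENNReal.mul_rpow_of_nonneg _ _ (by linarith)]; ring

end Fourier

theorem SchwartzMap.exists_eq_comp_sub_left {V E : Type*} [NormedAddCommGroup V]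
    [NormedSpace ℝ V] [NormedAddCommGroup E] [NormedSpace ℂ E] (ψ : 𝓢(V, E)) (x : V) :
    ∃ h : 𝓢(V, E), ⇑h = fun y => ψ (x - y) :=
  ⟨compSubConstCLM ℂ x
    (compCLMOfContinuousLinearEquiv ℂ (LinearIsometryEquiv.neg ℝ (E := V)).toContinuousLinearEquiv ψ),
    by ext y; simp⟩

section Pairing

variable {V E F G : Type*} [NormedAddCommGroup V] [InnerProductSpace ℝ V] [FiniteDimensional ℝ V]
  [MeasurableSpace V] [BorelSpace V]
  [NormedAddCommGroup E] [NormedSpace ℂ E] [NormedAddCommGroup F] [NormedSpace ℂ F]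
  [NormedAddCommGroup G] [NormedSpace ℂ G]

theorem SchwartzMap.fourier_apply_neg (h : 𝓢(V, E)) (x : V) : 𝓕 h (-x) = 𝓕⁻ h x := rfl

variable [CompleteSpace E] [CompleteSpace F] [CompleteSpace G]

theorem SchwartzMap.fourier_pairing (B : E →L[ℂ] F →L[ℂ] G) (f : 𝓢(V, E)) (g : 𝓢(V, F)) :
    𝓕 (pairing B f g) = convolution B (𝓕 f) (𝓕 g) := by
  have : pairing B f g = 𝓕⁻ (convolution B (𝓕 f) (𝓕 g)) := by
    ext x
    rw [← fourier_apply_neg, fourier_convolution, pairing_apply_apply, pairing_apply_apply,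
      fourier_apply_neg, fourier_apply_neg, FourierTransform.fourierInv_fourier_eq,
      FourierTransform.fourierInv_fourier_eq]
  rw [this, FourierTransform.fourier_fourierInv_eq]

theorem SchwartzMap.support_fourier_pairing_subset (B : E →L[ℂ] F →L[ℂ] G) (f : 𝓢(V, E))
    (g : 𝓢(V, F)) :
    Function.support (𝓕 ⇑(pairing B f g)) ⊆
      Function.support (𝓕 (f : V → E)) + Function.support (𝓕 (g : V → F)) := by
  have : 𝓕 ⇑(pairing B f g) = 𝓕 (f : V → E) ⋆[B] 𝓕 (g : V → F) := by
    ext ξ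
    rw [← fourier_coe, fourier_pairing, convolution_apply, fourier_coe, fourier_coe]
  rw [this]
  exact support_convolution_subset (L := B) (μ := (volume : Measure V))

end Pairing

theorem rpow_enorm_integral_mul_sub_le {V : Type*} [NormedAddCommGroup V]
    [InnerProductSpace ℝ V] [FiniteDimensional ℝ V] [MeasurableSpace V] [BorelSpace V]
    {f ψ : 𝓢(V, ℂ)} {Ω : Set V}
    (hΩ : Function.support (𝓕 ⇑f) - Function.support (𝓕 ⇑ψ) ⊆ Ω) {p : ℝ} (hp0 : 0 < p)
    (hp1 : p ≤ 1) (x : V) :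
    ‖∫ y, f y * ψ (x - y)‖ₑ ^ p ≤ volume Ω ^ (1 - p) * ∫⁻ y, ‖f y‖ₑ ^ p * ‖ψ (x - y)‖ₑ ^ p := by
  obtain ⟨h, hh⟩ := ψ.exists_eq_comp_sub_left x
  let P := pairing (ContinuousLinearMap.mul ℂ ℂ) f h
  have hP : ⇑P = fun y => f y * ψ (x - y) := by
    ext y; simp [P, hh]
  have hsupp : Function.support (𝓕 ⇑P) ⊆ Ω := by
    refine (support_fourier_pairing_subset _ f h).trans ?_
    rwa [hh, Real.support_fourier_comp_sub_left, ← sub_eq_add_neg]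
  have hFP : Integrable (𝓕 ⇑P) := by rw [← fourier_coe]; exact (𝓕 P).integrable
  calc ‖∫ y, f y * ψ (x - y)‖ₑ ^ p ≤ (∫⁻ y, ‖P y‖ₑ) ^ p := by
        rw [hP]; gcongr; exact enorm_integral_le_lintegral_enorm _
    _ ≤ volume Ω ^ (1 - p) * ∫⁻ y, ‖P y‖ₑ ^ p :=
        rpow_lintegral_enorm_le_of_support_fourier_subset P.continuous P.integrable hFP hsupp
          hp0 hp1
    _ = volume Ω ^ (1 - p) * ∫⁻ y, ‖f y‖ₑ ^ p * ‖ψ (x - y)‖ₑ ^ p := by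
        simp only [hP, enorm_mul, ENNReal.mul_rpow_of_nonneg _ _ hp0.le]

theorem stmt7_general {d : ℕ} (K₁ K₂ : Set (EuclideanSpace ℝ (Fin d)))
    (p : ℝ) (hp0 : 0 < p) (hp1 : p ≤ 1)
    (f ψ : SchwartzMap (EuclideanSpace ℝ (Fin d)) ℂ)
    (hf : tsupport (𝓕 ⇑f) ⊆ K₂) (hψ : tsupport (𝓕 ⇑ψ) ⊆ K₁) :
    eLpNorm (fun x => ∫ y, f y * ψ (x - y)) (ENNReal.ofReal p) volume ≤
      volume (K₁ - K₂) ^ (1 / p - 1) *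
        (eLpNorm (⇑f) (ENNReal.ofReal p) volume *
          eLpNorm (⇑ψ) (ENNReal.ofReal p) volume) := by
  have hΩ : Function.support (𝓕 ⇑f) - Function.support (𝓕 ⇑ψ) ⊆ -(K₁ - K₂) := by
    rw [neg_sub]
    exact Set.sub_subset_sub ((subset_tsupport _).trans hf) ((subset_tsupport _).trans hψ)
  have hmeas (u : 𝓢(EuclideanSpace ℝ (Fin d), ℂ)) : Measurable fun y => ‖u y‖ₑ ^ p :=
    u.continuous.enorm.measurable.pow_const p
  have hexp : (1 - p) * (1 / p) = 1 / p - 1 := by field_simp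
  calc eLpNorm (fun x => ∫ y, f y * ψ (x - y)) (ENNReal.ofReal p) volume
      = (∫⁻ x, ‖∫ y, f y * ψ (x - y)‖ₑ ^ p) ^ (1 / p) := eLpNorm_ofReal_eq_lintegral _ hp0
    _ ≤ (volume (-(K₁ - K₂)) ^ (1 - p) * ∫⁻ x, ∫⁻ y, ‖f y‖ₑ ^ p * ‖ψ (x - y)‖ₑ ^ p) ^ (1 / p) := by
        gcongr
        rw [← lintegral_const_mul _ (Measurable.lintegral_prod_right'
          (f := fun z => ‖f z.2‖ₑ ^ p * ‖ψ (z.1 - z.2)‖ₑ ^ p) (by fun_prop))]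
        exact lintegral_mono (rpow_enorm_integral_mul_sub_le hΩ hp0 hp1)
    _ = _ := by
        rw [lintegral_lintegral_mul_sub volume (hmeas f) (hmeas ψ), Measure.measure_neg,
          ENNReal.mul_rpow_of_nonneg _ _ (by positivity),
          ENNReal.mul_rpow_of_nonneg _ _ (by positivity), ← ENNReal.rpow_mul, hexp,
          eLpNorm_ofReal_eq_lintegral _ hp0, eLpNorm_ofReal_eq_lintegral _ hp0]

/-- Triebel's convolution inequality for `p ∈ (0,1]` and band-limited Schwartz functions:
`‖f ∗ ψ‖_{L^p} ≤ m(K₁ - K₂)^{1/p - 1} ‖f‖_{L^p} ‖ψ‖_{L^p}`. -/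
theorem stmt7 {d : ℕ} (K₁ K₂ : Set (EuclideanSpace ℝ (Fin d)))
    (hK₁ : IsCompact K₁) (hK₂ : IsCompact K₂)
    (p : ℝ) (hp0 : 0 < p) (hp1 : p ≤ 1)
    (f ψ : SchwartzMap (EuclideanSpace ℝ (Fin d)) ℂ)
    (hf : tsupport (𝓕 ⇑f) ⊆ K₂) (hψ : tsupport (𝓕 ⇑ψ) ⊆ K₁) :
    eLpNorm (fun x => ∫ y, f y * ψ (x - y)) (ENNReal.ofReal p) volume ≤
      volume (K₁ - K₂) ^ (1 / p - 1) *
        (eLpNorm (⇑f) (ENNReal.ofReal p) volume *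
          eLpNorm (⇑ψ) (ENNReal.ofReal p) volume) :=
  stmt7_general K₁ K₂ p hp0 hp1 f ψ hf hψ
end

section
/- Let 𝒟 be a countable collection of measurable subsets of ℝ^d of finite positive measure, let a = (a_D)_{D∈𝒟} be nonnegative reals, and C > 0. Then the following are equivalent: (i) for every subcollection 𝒟' ⊆ 𝒟 one has ∑_{D∈𝒟'} a_D ≤ C·m(⋃_{D∈𝒟'} D); (ii) for every family b = (b_D)_{D∈𝒟} of nonnegative reals one has ∑_{D∈𝒟} a_D b_D ≤ C·∫_{ℝ^d} sup_{D∈𝒟} b_D 𝟙_D(x) dx. -/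
/-!
Testing (ii) with `b = 𝟙_s` gives (i), because `sup_i b_i 𝟙_{D_i} ≤ 𝟙_{⋃_{i ∈ s} D_i}`.
Conversely, write `a_i b_i = ∫_0^∞ a_i 𝟙[t < b_i] dt`. At each level `t` the Carleson condition
applied to `{i | t < b_i}` bounds `∑_{t < b_i} a_i` by `C m{t < sup_i b_i 𝟙_{D_i}}`, and
integrating over `t` gives `C ∫ sup_i b_i 𝟙_{D_i}` by the layer-cake formula.
-/

open MeasureTheory Set
open scoped ENNReal NNReal

theorem measurableSet_setOf_ofReal_lt (c : ℝ≥0∞) :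
    MeasurableSet {t : ℝ | ENNReal.ofReal t < c} :=
  measurableSet_lt ENNReal.measurable_ofReal measurable_const

theorem volume_restrict_Ioi_setOf_ofReal_lt (c : ℝ≥0∞) :
    volume.restrict (Ioi (0 : ℝ)) {t | ENNReal.ofReal t < c} = c := by
  rw [Measure.restrict_apply (measurableSet_setOf_ofReal_lt c)]
  induction c using ENNReal.recTopCoe with
  | top => simp [Real.volume_Ioi]
  | coe r =>
    have : {t : ℝ | ENNReal.ofReal t < r} ∩ Ioi 0 = Ioo 0 (r : ℝ) := by
      ext t
      simp only [mem_inter_iff, mem_ofPred_eq, mem_Ioi, mem_Ioo]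
      constructor
      · rintro ⟨htr, ht⟩
        exact ⟨ht, (ENNReal.ofReal_lt_coe_iff ht.le).1 htr⟩
      · rintro ⟨ht, htr⟩
        exact ⟨(ENNReal.ofReal_lt_coe_iff ht.le).2 htr, ht⟩
    simp [this, Real.volume_Ioo]

theorem lintegral_eq_lintegral_meas_ofReal_lt {α : Type*} [MeasurableSpace α] (μ : Measure α)
    [SFinite μ] {f : α → ℝ≥0∞} (hf : Measurable f) :
    ∫⁻ x, f x ∂μ = ∫⁻ t in Ioi 0, μ {x | ENNReal.ofReal t < f x} := by
  have hS : MeasurableSet {p : α × ℝ | ENNReal.ofReal p.2 < f p.1} :=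
    measurableSet_lt (ENNReal.measurable_ofReal.comp measurable_snd) (hf.comp measurable_fst)
  calc ∫⁻ x, f x ∂μ
      = ∫⁻ x, volume.restrict (Ioi 0) {t | ENNReal.ofReal t < f x} ∂μ := by
        simp only [volume_restrict_Ioi_setOf_ofReal_lt]
    _ = ∫⁻ t in Ioi 0, μ {x | ENNReal.ofReal t < f x} :=
        (Measure.prod_apply hS).symm.trans (Measure.prod_apply_symm hS)

section Carleson

variable {α ι : Type*} [MeasurableSpace α] {μ : Measure α} {D : ι → Set α}

theorem tsum_mul_le_mul_lintegral_iSup_indicator [Countable ι] [SFinite μ]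
    (hD : ∀ i, MeasurableSet (D i)) {a b : ι → ℝ≥0∞} {C : ℝ≥0}
    (h : ∀ s : Set ι, ∑' i : s, a i ≤ C * μ (⋃ i ∈ s, D i)) :
    ∑' i, a i * b i ≤ C * ∫⁻ x, ⨆ i, (D i).indicator (fun _ => b i) x ∂μ := by
  set f : α → ℝ≥0∞ := fun x => ⨆ i, (D i).indicator (fun _ => b i) x
  have hf : Measurable f := .iSup fun i => measurable_const.indicator (hD i)
  have hlevel : ∀ t, ⋃ i ∈ {i | ENNReal.ofReal t < b i}, D i ⊆ {x | ENNReal.ofReal t < f x} := by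
    intro t x hx
    obtain ⟨i, hti, hx⟩ := mem_iUnion₂.1 hx
    calc ENNReal.ofReal t < b i := hti
      _ = (D i).indicator (fun _ => b i) x := (indicator_of_mem hx (fun _ => b i)).symm
      _ ≤ f x := le_iSup (fun i => (D i).indicator (fun _ => b i) x) i
  calc ∑' i, a i * b i
      = ∑' i, ∫⁻ t in Ioi 0, {t | ENNReal.ofReal t < b i}.indicator (fun _ => a i) t := by
        refine tsum_congr fun i => ?_
        rw [lintegral_indicator_const (measurableSet_setOf_ofReal_lt _),
          volume_restrict_Ioi_setOf_ofReal_lt]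
    _ = ∫⁻ t in Ioi 0, ∑' i : {i | ENNReal.ofReal t < b i}, a i := by
        rw [← lintegral_tsum fun i => (measurable_const.indicator
          (measurableSet_setOf_ofReal_lt _)).aemeasurable]
        refine lintegral_congr fun t => ?_
        rw [tsum_subtype]
        rfl
    _ ≤ ∫⁻ t in Ioi 0, C * μ {x | ENNReal.ofReal t < f x} :=
        lintegral_mono fun t => (h _).trans (by gcongr; exact hlevel t)
    _ = C * ∫⁻ x, f x ∂μ := by
        rw [lintegral_const_mul' _ _ ENNReal.coe_ne_top,
          lintegral_eq_lintegral_meas_ofReal_lt μ hf]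

theorem lintegral_iSup_indicator_indicator_one_le (s : Set ι) :
    ∫⁻ x, ⨆ i, (D i).indicator (fun _ => s.indicator 1 i) x ∂μ ≤ μ (⋃ i ∈ s, D i) := by
  calc ∫⁻ x, ⨆ i, (D i).indicator (fun _ => s.indicator 1 i) x ∂μ
      ≤ ∫⁻ x, (⋃ i ∈ s, D i).indicator 1 x ∂μ := by
        refine lintegral_mono fun x => iSup_le fun i => ?_
        by_cases hi : i ∈ s
        · by_cases hx : x ∈ D i
          · simp [hi, hx, indicator_of_mem (mem_biUnion hi hx)]
          · simp [hx]
        · simp [hi]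
    _ ≤ μ (⋃ i ∈ s, D i) := (lintegral_indicator_le _ _).trans (setLIntegral_one _).le

end Carleson

theorem stmt13_general {d : ℕ} {ι : Type*} [Countable ι]
    (D : ι → Set (EuclideanSpace ℝ (Fin d)))
    (hmeas : ∀ i, MeasurableSet (D i))
    (a : ι → ℝ≥0) (C : ℝ≥0) :
    (∀ s : Set ι, ∑' i : s, (a i : ℝ≥0∞) ≤ C * volume (⋃ i ∈ s, D i)) ↔
      (∀ b : ι → ℝ≥0, ∑' i, (a i : ℝ≥0∞) * b i ≤
        C * ∫⁻ x, ⨆ i, (D i).indicator (fun _ => (b i : ℝ≥0∞)) x) := by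
  refine ⟨fun h b => tsum_mul_le_mul_lintegral_iSup_indicator hmeas h, fun h s => ?_⟩
  have hb : ∀ i, ((s.indicator 1 i : ℝ≥0) : ℝ≥0∞) = s.indicator 1 i :=
    ENNReal.coe_indicator s 1
  calc ∑' i : s, (a i : ℝ≥0∞)
      = ∑' i, (a i : ℝ≥0∞) * s.indicator 1 i := by
        rw [tsum_subtype s (fun i => (a i : ℝ≥0∞))]
        refine tsum_congr fun i => ?_
        by_cases hi : i ∈ s <;> simp [hi]
    _ ≤ C * ∫⁻ x, ⨆ i, (D i).indicator (fun _ => s.indicator 1 i) x := by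
        simpa only [hb] using h (s.indicator 1)
    _ ≤ C * volume (⋃ i ∈ s, D i) := by
        gcongr
        exact lintegral_iSup_indicator_indicator_one_le s

/-- Carleson/testing duality: a nonnegative sequence over a countable collection of
measurable sets of finite positive measure is `C`-Carleson if and only if the dual
testing inequality holds with the same constant. -/
theorem stmt13 {d : ℕ} {ι : Type*} [Countable ι]
    (D : ι → Set (EuclideanSpace ℝ (Fin d)))
    (hmeas : ∀ i, MeasurableSet (D i))
    (hpos : ∀ i, 0 < volume (D i)) (hfin : ∀ i, volume (D i) < ⊤)
    (a : ι → ℝ≥0) (C : ℝ≥0) (hC : 0 < C) :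
    (∀ s : Set ι, ∑' i : s, (a i : ℝ≥0∞) ≤ C * volume (⋃ i ∈ s, D i)) ↔
      (∀ b : ι → ℝ≥0, ∑' i, (a i : ℝ≥0∞) * b i ≤
        C * ∫⁻ x, ⨆ i, (D i).indicator (fun _ => (b i : ℝ≥0∞)) x) :=
  stmt13_general D hmeas a C
end

section
/- Let A, B ∈ GL(d, ℝ) be expansive matrices, and let Q, P ⊆ ℝ^d be open sets with closures compact in ℝ^d \ {0} such that (A^iQ)_{i∈ℤ} and (B^jP)_{j∈ℤ} each cover ℝ^d \ {0}. Suppose sup_{j∈ℤ} |I_j| = ∞ where I_j = {i ∈ ℤ : A^iQ ∩ B^jP ≠ ∅}, and let N ∈ ℕ. Then for every K ∈ ℕ there exist j₀ ∈ ℤ, points η₁,…,η_K ∈ ℝ^d, a strictly increasing sequence i₁,…,i_K ∈ ℤ with |i_k − i_{k'}| > 2N for k ≠ k', and δ₀ > 0 such that B_{δ₀}(η_k) ⊆ A^{i_k}Q ∩ B^{j₀}P for all k = 1,…,K. -/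
open MeasureTheory
open scoped Pointwise

/-!
Pigeonhole on residues mod `2N + 1`: among at least `K (2N + 1)` indices `i` with
`A^i Q ∩ B^{j₀} P ≠ ∅`, some `K` are congruent mod `2N + 1`, so any two of them differ by more
than `2N`. Since `A` and `B` are invertible, each `A^i Q ∩ B^{j₀} P` is open, and finitely many
nonempty open sets all contain a ball of one common radius.
-/

open Filter Topology

-- `ms M` is definitionally the continuous linear map `Matrix.toEuclideanCLM M`.
theorem isOpenMap_ms {d : ℕ} {M : Matrix (Fin d) (Fin d) ℝ} (hM : IsUnit M) :
    IsOpenMap (ms M) :=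
  (ContinuousLinearEquiv.unitsEquiv ℝ _
    (hM.map (Matrix.toEuclideanCLM (n := Fin d) (𝕜 := ℝ))).unit).toHomeomorph.isOpenMap

theorem Matrix.isUnit_zpow_of_isUnit {n R : Type*} [Fintype n] [DecidableEq n] [CommRing R]
    {M : Matrix n n R} (hM : IsUnit M) (i : ℤ) : IsUnit (M ^ i) := by
  rw [Matrix.isUnit_iff_isUnit_det] at hM ⊢
  exact Matrix.isUnit_det_zpow_iff.2 (.inl hM)

theorem Int.lt_abs_sub_of_intCast_eq {m : ℕ} {i i' : ℤ} (hne : i ≠ i')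
    (hmod : (i : ZMod (m + 1)) = i') : (m : ℤ) < |i - i'| := by
  have hdvd : ((m + 1 : ℕ) : ℤ) ∣ |i - i'| :=
    (dvd_abs _ _).2 (by simpa using (ZMod.intCast_eq_intCast_iff_dvd_sub _ _ _).1 hmod.symm)
  have := Int.le_of_dvd (abs_pos.2 (sub_ne_zero.2 hne)) hdvd
  omega

theorem Finset.exists_subset_card_eq_separated (S : Finset ℤ) {K m : ℕ}
    (hS : K * (m + 1) ≤ S.card) :
    ∃ T ⊆ S, T.card = K ∧ ∀ i ∈ T, ∀ i' ∈ T, i ≠ i' → (m : ℤ) < |i - i'| := by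
  obtain ⟨r, -, hr⟩ := Finset.exists_le_card_fiber_of_mul_le_card_of_maps_to
    (f := fun i : ℤ => (i : ZMod (m + 1))) (fun _ _ => Finset.mem_univ _) Finset.univ_nonempty
    (by rwa [Finset.card_univ, ZMod.card, mul_comm])
  obtain ⟨T, hT, hTcard⟩ := Finset.exists_subset_card_eq hr
  refine ⟨T, hT.trans (Finset.filter_subset _ _), hTcard, fun i hi i' hi' hne => ?_⟩
  exact Int.lt_abs_sub_of_intCast_eq hne
    (((Finset.mem_filter.1 (hT hi)).2).trans (Finset.mem_filter.1 (hT hi')).2.symm)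

theorem Finset.exists_strictMono_separated (S : Finset ℤ) {K m : ℕ}
    (hS : K * (m + 1) ≤ S.card) :
    ∃ idx : Fin K → ℤ, StrictMono idx ∧ (∀ k, idx k ∈ S) ∧
      ∀ k k', k ≠ k' → (m : ℤ) < |idx k - idx k'| := by
  obtain ⟨T, hTS, hTcard, hsep⟩ := S.exists_subset_card_eq_separated hS
  let idx := T.orderEmbOfFin hTcard
  exact ⟨idx, idx.strictMono, fun k => hTS (T.orderEmbOfFin_mem hTcard k),
    fun k k' hne => hsep _ (T.orderEmbOfFin_mem hTcard k) _ (T.orderEmbOfFin_mem hTcard k')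
      (idx.injective.ne hne)⟩

theorem IsOpen.eventually_ball_subset {X : Type*} [PseudoMetricSpace X] {U : Set X} {x : X}
    (hU : IsOpen U) (hx : x ∈ U) : ∀ᶠ δ in 𝓝[>] (0 : ℝ), Metric.ball x δ ⊆ U := by
  obtain ⟨ε, hε, hball⟩ := Metric.isOpen_iff.1 hU x hx
  filter_upwards [Ioo_mem_nhdsGT hε] with δ hδ
  exact (Metric.ball_subset_ball hδ.2.le).trans hball

theorem exists_pos_forall_ball_subset {ι X : Type*} [Finite ι] [PseudoMetricSpace X]
    {U : ι → Set X} (hU : ∀ k, IsOpen (U k)) (hne : ∀ k, (U k).Nonempty) :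
    ∃ (η : ι → X) (δ : ℝ), 0 < δ ∧ ∀ k, Metric.ball (η k) δ ⊆ U k := by
  choose η hη using hne
  obtain ⟨δ, hδ, hball⟩ := ((eventually_all.2 fun k => (hU k).eventually_ball_subset (hη k)).and
    self_mem_nhdsWithin).exists
  exact ⟨η, δ, hball, hδ⟩

theorem stmt16_general {d : ℕ} (A B : Matrix (Fin d) (Fin d) ℝ)
    (hA : Expansive A) (hB : Expansive B)
    (Q P : Set (EuclideanSpace ℝ (Fin d))) (hQo : IsOpen Q) (hPo : IsOpen P)
    (N : ℕ)
    (hsup : ∀ M : ℕ, ∃ j : ℤ, ∃ S : Finset ℤ, M ≤ S.card ∧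
      ∀ i ∈ S, (ms (A ^ i) '' Q ∩ ms (B ^ j) '' P).Nonempty) :
    ∀ K : ℕ, ∃ (j₀ : ℤ) (η : Fin K → EuclideanSpace ℝ (Fin d)) (idx : Fin K → ℤ)
      (δ₀ : ℝ), 0 < δ₀ ∧ StrictMono idx ∧
        (∀ k k' : Fin K, k ≠ k' → 2 * (N : ℤ) < |idx k - idx k'|) ∧
        ∀ k : Fin K, Metric.ball (η k) δ₀ ⊆ ms (A ^ idx k) '' Q ∩ ms (B ^ j₀) '' P := by
  intro K
  obtain ⟨j₀, S, hScard, hSne⟩ := hsup (K * (2 * N + 1))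
  obtain ⟨idx, hmono, hmem, hsep⟩ := S.exists_strictMono_separated (m := 2 * N) hScard
  have hopen (i j : ℤ) : IsOpen (ms (A ^ i) '' Q ∩ ms (B ^ j) '' P) :=
    (isOpenMap_ms (Matrix.isUnit_zpow_of_isUnit hA.1 i) Q hQo).inter
      (isOpenMap_ms (Matrix.isUnit_zpow_of_isUnit hB.1 j) P hPo)
  obtain ⟨η, δ₀, hδ₀, hball⟩ :=
    exists_pos_forall_ball_subset (fun k => hopen (idx k) j₀) (fun k => hSne _ (hmem k))
  exact ⟨j₀, η, idx, δ₀, hδ₀, hmono, fun k k' hne => by exact_mod_cast hsep k k' hne, hball⟩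

/-- If `sup_j |I_j| = ∞`, then for every `K` there are `j₀`, a ball radius `δ₀ > 0`,
points `η_k` and a strictly increasing `2N`-separated sequence `i_k` with
`B_{δ₀}(η_k) ⊆ A^{i_k} Q ∩ B^{j₀} P` for all `k`. -/
theorem stmt16 {d : ℕ} (A B : Matrix (Fin d) (Fin d) ℝ)
    (hA : Expansive A) (hB : Expansive B)
    (Q P : Set (EuclideanSpace ℝ (Fin d))) (hQo : IsOpen Q) (hPo : IsOpen P)
    (hQc : IsCompact (closure Q)) (hPc : IsCompact (closure P))
    (hQ0 : (0 : EuclideanSpace ℝ (Fin d)) ∉ closure Q)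
    (hP0 : (0 : EuclideanSpace ℝ (Fin d)) ∉ closure P)
    (hQcov : {x : EuclideanSpace ℝ (Fin d) | x ≠ 0} ⊆ ⋃ i : ℤ, ms (A ^ i) '' Q)
    (hPcov : {x : EuclideanSpace ℝ (Fin d) | x ≠ 0} ⊆ ⋃ j : ℤ, ms (B ^ j) '' P)
    (N : ℕ)
    (hsup : ∀ M : ℕ, ∃ j : ℤ, ∃ S : Finset ℤ, M ≤ S.card ∧
      ∀ i ∈ S, (ms (A ^ i) '' Q ∩ ms (B ^ j) '' P).Nonempty) :
    ∀ K : ℕ, ∃ (j₀ : ℤ) (η : Fin K → EuclideanSpace ℝ (Fin d)) (idx : Fin K → ℤ)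
      (δ₀ : ℝ), 0 < δ₀ ∧ StrictMono idx ∧
        (∀ k k' : Fin K, k ≠ k' → 2 * (N : ℤ) < |idx k - idx k'|) ∧
        ∀ k : Fin K, Metric.ball (η k) δ₀ ⊆ ms (A ^ idx k) '' Q ∩ ms (B ^ j₀) '' P :=
  stmt16_general A B hA hB Q P hQo hPo N hsup
end
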